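/- arXiv:1006.2767 — 6 statements merged into one kernel-verified Lean document; each statement's English description precedes it below -/
import Mathlib

section
/- Let Q ⊆ ℝ^d be a polytope (the convex hull of a finite set) and let F be an exposed face of Q with ∅ ≠ F ≠ Q. Then for every nonempty exposed face F' of Q with F' ⊆ F there exists an exposed face G of Q such that G is not contained in F and G ∩ F = F'. (This is the surjectivity of the map s: F ↦ F ∩ (far face) used in the proof of the paper's size Lemma.) -/
open scoped RealInnerProductSpace

/-- For a polytope `Q` and an exposed face `∅ ≠ F ≠ Q`, every nonempty
exposed face `F'` of `Q` contained in `F` arises as `G ∩ F` for some exposed face `G`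
of `Q` not contained in `F` (surjectivity of the map `s`). -/
theorem stmt_0 {d : ℕ} (S : Set (EuclideanSpace ℝ (Fin d))) (hS : S.Finite)
    (Q : Set (EuclideanSpace ℝ (Fin d))) (hQ : Q = convexHull ℝ S)
    (F : Set (EuclideanSpace ℝ (Fin d))) (hF : IsExposed ℝ Q F)
    (hF0 : F ≠ ∅) (hFQ : F ≠ Q)
    (F' : Set (EuclideanSpace ℝ (Fin d))) (hF' : IsExposed ℝ Q F')
    (hF'ne : F'.Nonempty) (hF'F : F' ⊆ F) :
    ∃ G : Set (EuclideanSpace ℝ (Fin d)),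
      IsExposed ℝ Q G ∧ ¬ G ⊆ F ∧ G ∩ F = F' := by
  classical
  have hQconv : Convex ℝ Q := hQ ▸ convex_convexHull ℝ S
  have hFne : F.Nonempty := Set.nonempty_iff_ne_empty.2 hF0
  obtain ⟨l, hl⟩ := hF hFne
  obtain ⟨m, hm⟩ := hF' hF'ne
  obtain ⟨x₀, hx₀⟩ := hF'ne
  have hx₀F : x₀ ∈ F := hF'F hx₀
  have hx₀Q : x₀ ∈ Q := hF.subset hx₀F
  set c := l x₀ with hc
  set M := m x₀ with hM
  have hlQ : ∀ y ∈ Q, l y ≤ c := by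
    rw [hl] at hx₀F; exact hx₀F.2
  have hmQ : ∀ y ∈ Q, m y ≤ M := by
    rw [hm] at hx₀; exact hx₀.2
  have hlF : ∀ x ∈ F, l x = c := by
    intro x hx
    rw [hl] at hx
    exact le_antisymm (hlQ x hx.1) (hx.2 x₀ hx₀Q)
  have hmF' : ∀ x ∈ F', m x = M := by
    intro x hx
    rw [hm] at hx
    exact le_antisymm (hmQ x hx.1) (hx.2 x₀ hx₀Q)
  have hFc : ∀ x ∈ Q, l x = c → x ∈ F := by
    intro x hx hxc
    rw [hl]
    exact ⟨hx, fun y hy => (hlQ y hy).trans hxc.ge⟩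
  have hF'M : ∀ x ∈ Q, m x = M → x ∈ F' := by
    intro x hx hxM
    rw [hm]
    exact ⟨hx, fun y hy => (hmQ y hy).trans hxM.ge⟩
  have hSQ : S ⊆ Q := hQ ▸ subset_convexHull ℝ S
  -- the set of points of S outside F is nonempty
  have hCne : (S \ F).Nonempty := by
    rw [Set.nonempty_iff_ne_empty]
    intro h
    have hSF : S ⊆ F := by
      intro s hs
      by_contra hsF
      exact absurd h (Set.nonempty_iff_ne_empty.1 ⟨s, hs, hsF⟩)
    apply hFQ
    apply Set.Subset.antisymm hF.subset
    rw [hQ]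
    exact convexHull_min hSF (hF.convex hQconv)
  -- strict inequalities on S \ F
  have hkey : ∀ s ∈ S \ F, 0 < c - l s ∧ 0 < M - m s := by
    rintro s ⟨hsS, hsF⟩
    constructor
    · rcases lt_or_eq_of_le (hlQ s (hSQ hsS)) with h | h
      · linarith
      · exact absurd (hFc s (hSQ hsS) h) hsF
    · rcases lt_or_eq_of_le (hmQ s (hSQ hsS)) with h | h
      · linarith
      · exact absurd (hF'F (hF'M s (hSQ hsS) h)) hsF
  -- take the minimizer of (M - m s)/(c - l s) over S \ F
  have hCfin : (S \ F).Finite := hS.subset Set.diff_subset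
  obtain ⟨s₀, hs₀mem, hs₀min⟩ :=
    Set.exists_min_image (S \ F) (fun s => (M - m s) / (c - l s)) hCfin hCne
  set t := (M - m s₀) / (c - l s₀) with ht
  have hs₀key := hkey s₀ hs₀mem
  have ht_pos : 0 < t := div_pos hs₀key.2 hs₀key.1
  have hts : ∀ s ∈ S \ F, t * (c - l s) ≤ M - m s := by
    intro s hs
    have h := hs₀min s hs
    rw [le_div_iff₀ (hkey s hs).1] at h
    exact h
  have hts₀ : t * (c - l s₀) = M - m s₀ := div_mul_cancel₀ _ (ne_of_gt hs₀key.1)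
  -- the new exposing functional
  set g : EuclideanSpace ℝ (Fin d) →L[ℝ] ℝ := m - t • l with hg
  have hgval : ∀ x, g x = m x - t * l x := by
    intro x
    simp [hg, smul_eq_mul]
  set μ := M - t * c with hμ
  -- g ≤ μ on S
  have hgS : ∀ s ∈ S, g s ≤ μ := by
    intro s hs
    rw [hgval, hμ]
    by_cases hsF : s ∈ F
    · have := hmQ s (hSQ hs)
      rw [hlF s hsF]
      linarith
    · have := hts s ⟨hs, hsF⟩
      nlinarith
  -- hence g ≤ μ on Q
  have hgQ : ∀ y ∈ Q, g y ≤ μ := by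
    have hconv : Convex ℝ {z : EuclideanSpace ℝ (Fin d) | g z ≤ μ} := by
      have : IsLinearMap ℝ (fun z : EuclideanSpace ℝ (Fin d) => g z) :=
        ⟨g.map_add, g.map_smul⟩
      exact convex_halfSpace_le this μ
    intro y hy
    rw [hQ] at hy
    exact convexHull_min hgS hconv hy
  have hgx₀ : g x₀ = μ := by rw [hgval]
  refine ⟨{x ∈ Q | ∀ y ∈ Q, g y ≤ g x}, fun _ => ⟨g, rfl⟩, ?_, ?_⟩
  · intro hGF
    refine (hs₀mem.2) (hGF ⟨hSQ hs₀mem.1, ?_⟩)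
    intro y hy
    have : g s₀ = μ := by rw [hgval]; rw [hμ]; linarith [hts₀]
    rw [this]
    exact hgQ y hy
  · ext x
    constructor
    · rintro ⟨⟨hxQ, hxmax⟩, hxF⟩
      have hgx : g x = μ := le_antisymm (hgQ x hxQ) (hgx₀ ▸ hxmax x₀ hx₀Q)
      rw [hgval] at hgx
      rw [hlF x hxF] at hgx
      have : m x = M := by rw [hμ] at hgx; linarith
      exact hF'M x hxQ this
    · intro hx
      have hxF : x ∈ F := hF'F hx
      have hxQ : x ∈ Q := hF.subset hxF
      have hgx : g x = μ := by
        rw [hgval, hlF x hxF, hmF' x hx, hμ]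
      exact ⟨⟨hxQ, fun y hy => (hgQ y hy).trans_eq hgx.symm⟩, hxF⟩
end

section
/- Let Q ⊆ ℝ^d be a polytope (the convex hull of a nonempty finite set) and let F be an exposed face of Q with F ≠ Q. Then the total number of exposed faces of Q is at most twice the number of exposed faces of Q that are not contained in F; i.e. Set.ncard {G : Set (EuclideanSpace ℝ (Fin d)) | IsExposed ℝ Q G} ≤ 2 * Set.ncard {G | IsExposed ℝ Q G ∧ ¬ G ⊆ F}. (This is the paper's Lemma φ̄ ≤ 2(φ−1): taking Q to be a projective closure of a pointed unbounded polyhedron P and F its far face, the faces of P correspond exactly to the empty face together with the faces of Q not contained in F, so the size φ̄ of the face lattice of Q is at most 2(φ−1), where φ is the number of faces of P.) -/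
/-!
It suffices to show that `G' ↦ G' ∩ F` maps the exposed faces of `Q` not contained in `F` onto
those contained in `F`. Let `F` be exposed by `l` and a nonempty `G ⊆ F` by `m`. Rotating the
supporting hyperplane of `G` about `G` away from `F`, i.e. passing to `m + t • l`, does not change
the face cut out on `F`; for the largest admissible `t`, which is attained at one of the finitely
many points of `S` outside `F`, the new face also contains that point. The empty face is the
trace on `F` of `Q` if `F = ∅`, and of the face minimizing `l` otherwise.
-/

open Set

theorem Set.Finite.exists_add_mul_le_and_eq {ι : Type*} {T : Set ι} (hT : T.Finite)
    (hTne : T.Nonempty) (f g : ι → ℝ) (a c : ℝ) (hg : ∀ i ∈ T, g i < c) :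
    ∃ t : ℝ, (∀ i ∈ T, f i + t * g i ≤ a + t * c) ∧
      ∃ i ∈ T, f i + t * g i = a + t * c := by
  obtain ⟨i₀, hi₀, hmax⟩ := T.exists_max_image (fun i => (f i - a) / (c - g i)) hT hTne
  refine ⟨(f i₀ - a) / (c - g i₀), fun i hi => ?_, i₀, hi₀, ?_⟩
  · have := (div_le_iff₀ (sub_pos.2 (hg i hi))).1 (hmax i hi)
    linarith
  · have := div_mul_cancel₀ (f i₀ - a) (sub_pos.2 (hg i₀ hi₀)).ne'
    linarith

variable {E : Type*} [AddCommGroup E] [Module ℝ E] [TopologicalSpace E] {S A : Set E}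

namespace ContinuousLinearMap

theorem le_of_mem_convexHull (l : StrongDual ℝ E) {b : ℝ} (h : ∀ s ∈ S, l s ≤ b) {x : E}
    (hx : x ∈ convexHull ℝ S) : l x ≤ b :=
  convexHull_min h (convex_halfSpace_le l.isLinear b) hx

theorem exists_mem_toExposed_convexHull (l : StrongDual ℝ E) (hS : S.Finite)
    (hSne : S.Nonempty) : ∃ s ∈ S, s ∈ l.toExposed (convexHull ℝ S) := by
  obtain ⟨s, hs, hmax⟩ := S.exists_max_image l hS hSne
  exact ⟨s, hs, subset_convexHull ℝ S hs, fun y hy => l.le_of_mem_convexHull hmax hy⟩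

theorem mem_toExposed_iff_of_mem {l : StrongDual ℝ E} {x₀ x : E}
    (h₀ : x₀ ∈ l.toExposed A) : x ∈ l.toExposed A ↔ x ∈ A ∧ l x = l x₀ :=
  ⟨fun hx => ⟨hx.1, le_antisymm (h₀.2 x hx.1) (hx.2 x₀ h₀.1)⟩,
    fun ⟨hx, hlx⟩ => ⟨hx, fun y hy => hlx ▸ h₀.2 y hy⟩⟩

theorem toExposed_eq_self_of_inter_neg_nonempty {l : StrongDual ℝ E}
    (h : ((-l).toExposed A ∩ l.toExposed A).Nonempty) : l.toExposed A = A := by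
  obtain ⟨x, hmin, hmax⟩ := h
  refine subset_antisymm (fun y hy => hy.1) fun y hy =>
    (mem_toExposed_iff_of_mem hmax).2 ⟨hy, le_antisymm (hmax.2 y hy) ?_⟩
  simpa only [neg_apply, neg_le_neg_iff] using hmin.2 y hy

theorem exists_toExposed_inter_eq (hS : S.Finite) {l m : StrongDual ℝ E}
    (hSF : ¬ S ⊆ l.toExposed (convexHull ℝ S)) (hG : (m.toExposed (convexHull ℝ S)).Nonempty)
    (hGF : m.toExposed (convexHull ℝ S) ⊆ l.toExposed (convexHull ℝ S)) :
    ∃ n : StrongDual ℝ E,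
      n.toExposed (convexHull ℝ S) ∩ l.toExposed (convexHull ℝ S) =
        m.toExposed (convexHull ℝ S) ∧
      ¬ n.toExposed (convexHull ℝ S) ⊆ l.toExposed (convexHull ℝ S) := by
  set Q := convexHull ℝ S
  obtain ⟨x₀, hx₀⟩ := hG
  have hx₀F := hGF hx₀
  have hSQ : S ⊆ Q := subset_convexHull ℝ S
  have hlt : ∀ s ∈ S \ l.toExposed Q, l s < l x₀ := fun s hs =>
    (hx₀F.2 s (hSQ hs.1)).lt_of_ne fun h =>
      hs.2 ((mem_toExposed_iff_of_mem hx₀F).2 ⟨hSQ hs.1, h⟩)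
  obtain ⟨t, hle, s₁, hs₁, hs₁eq⟩ :=
    (hS.sdiff (t := l.toExposed Q)).exists_add_mul_le_and_eq (sdiff_nonempty.2 hSF)
      m l (m x₀) (l x₀) hlt
  set n := m + t • l
  have hn : ∀ x, n x = m x + t * l x := fun x => rfl
  have hnS : ∀ s ∈ S, n s ≤ n x₀ := by
    intro s hs
    by_cases hsF : s ∈ l.toExposed Q
    · rw [hn, hn, ((mem_toExposed_iff_of_mem hx₀F).1 hsF).2]
      linarith [hx₀.2 s (hSQ hs)]
    · exact hn s ▸ hn x₀ ▸ hle s ⟨hs, hsF⟩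
  have hx₀n : x₀ ∈ n.toExposed Q := ⟨hx₀.1, fun y hy => n.le_of_mem_convexHull hnS hy⟩
  refine ⟨n, subset_antisymm ?_ ?_, ?_⟩
  · rintro x ⟨hxn, hxF⟩
    have hnx := ((mem_toExposed_iff_of_mem hx₀n).1 hxn).2
    rw [hn, hn, ((mem_toExposed_iff_of_mem hx₀F).1 hxF).2] at hnx
    exact (mem_toExposed_iff_of_mem hx₀).2 ⟨hxn.1, by linarith⟩
  · intro x hx
    have hmx := ((mem_toExposed_iff_of_mem hx₀).1 hx).2
    have hlx := ((mem_toExposed_iff_of_mem hx₀F).1 (hGF hx)).2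
    exact ⟨(mem_toExposed_iff_of_mem hx₀n).2 ⟨hx.1, by rw [hn, hn, hmx, hlx]⟩, hGF hx⟩
  · have hs₁n : s₁ ∈ n.toExposed Q :=
      (mem_toExposed_iff_of_mem hx₀n).2 ⟨hSQ hs₁.1, by rw [hn, hn]; linarith⟩
    exact fun h => hs₁.2 (h hs₁n)

end ContinuousLinearMap

theorem IsExposed.eq_convexHull_of_subset {F : Set E} (hF : IsExposed ℝ (convexHull ℝ S) F)
    (hSF : S ⊆ F) : F = convexHull ℝ S :=
  hF.subset.antisymm (convexHull_min hSF (hF.convex (convex_convexHull ℝ S)))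

theorem exists_isExposed_not_subset_inter_eq (hS : S.Finite) {F G : Set E}
    (hF : IsExposed ℝ (convexHull ℝ S) F) (hFQ : F ≠ convexHull ℝ S)
    (hG : IsExposed ℝ (convexHull ℝ S) G) (hGF : G ⊆ F) :
    ∃ G', IsExposed ℝ (convexHull ℝ S) G' ∧ ¬ G' ⊆ F ∧ G' ∩ F = G := by
  have hSF : ¬ S ⊆ F := fun h => hFQ (hF.eq_convexHull_of_subset h)
  rcases F.eq_empty_or_nonempty with rfl | hFne
  · refine ⟨convexHull ℝ S, IsExposed.refl _, fun h => hFQ (subset_empty_iff.1 h).symm, ?_⟩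
    rw [inter_empty, subset_empty_iff.1 hGF]
  obtain ⟨l, rfl⟩ : ∃ l : StrongDual ℝ E, F = l.toExposed (convexHull ℝ S) := hF hFne
  rcases G.eq_empty_or_nonempty with rfl | hGne
  · have hdisj : (-l).toExposed (convexHull ℝ S) ∩ l.toExposed (convexHull ℝ S) = ∅ :=
      not_nonempty_iff_eq_empty.1 fun h => hFQ (l.toExposed_eq_self_of_inter_neg_nonempty h)
    obtain ⟨s, -, hs⟩ :=
      (-l).exists_mem_toExposed_convexHull hS ((nonempty_of_not_subset hSF).mono sdiff_subset)
    refine ⟨_, ContinuousLinearMap.toExposed.isExposed, fun h => ?_, hdisj⟩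
    rw [inter_eq_left.2 h] at hdisj
    exact hdisj.subset hs
  obtain ⟨m, rfl⟩ : ∃ m : StrongDual ℝ E, G = m.toExposed (convexHull ℝ S) := hG hGne
  obtain ⟨n, hn, hnF⟩ := ContinuousLinearMap.exists_toExposed_inter_eq hS hSF hGne hGF
  exact ⟨_, ContinuousLinearMap.toExposed.isExposed, hnF, hn⟩

theorem Set.ncard_le_two_mul_of_sdiff_subset_image {α : Type*} {s t : Set α} (f : α → α)
    (hts : t ⊆ s) (h : s \ t ⊆ f '' t) : s.ncard ≤ 2 * t.ncard := by
  by_cases hs : s.Finite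
  · have hdiff := ncard_le_ncard h ((hs.subset hts).image f)
    have himage := ncard_image_le (f := f) (hs.subset hts)
    have hsplit := ncard_sdiff_add_ncard_of_subset hts hs
    omega
  · rw [Infinite.ncard hs]
    exact Nat.zero_le _

theorem stmt_1_general {d : ℕ} (S : Set (EuclideanSpace ℝ (Fin d))) (hS : S.Finite)
    (Q : Set (EuclideanSpace ℝ (Fin d))) (hQ : Q = convexHull ℝ S)
    (F : Set (EuclideanSpace ℝ (Fin d))) (hF : IsExposed ℝ Q F) (hFQ : F ≠ Q) :
    Set.ncard {G : Set (EuclideanSpace ℝ (Fin d)) | IsExposed ℝ Q G} ≤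
      2 * Set.ncard {G : Set (EuclideanSpace ℝ (Fin d)) | IsExposed ℝ Q G ∧ ¬ G ⊆ F} := by
  subst hQ
  refine ncard_le_two_mul_of_sdiff_subset_image (· ∩ F) (fun G hG => hG.1) ?_
  rintro G ⟨hG, hGF⟩
  obtain ⟨G', hG', hG'F, rfl⟩ :=
    exists_isExposed_not_subset_inter_eq hS hF hFQ hG (not_not.1 fun h => hGF ⟨hG, h⟩)
  exact ⟨G', ⟨hG', hG'F⟩, rfl⟩

/-- For a polytope `Q` and an exposed face `F ≠ Q`, the number of exposed
faces of `Q` is at most twice the number of exposed faces not contained in `F`. -/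
theorem stmt_1 {d : ℕ} (S : Set (EuclideanSpace ℝ (Fin d))) (hS : S.Finite)
    (hSne : S.Nonempty)
    (Q : Set (EuclideanSpace ℝ (Fin d))) (hQ : Q = convexHull ℝ S)
    (F : Set (EuclideanSpace ℝ (Fin d))) (hF : IsExposed ℝ Q F) (hFQ : F ≠ Q) :
    Set.ncard {G : Set (EuclideanSpace ℝ (Fin d)) | IsExposed ℝ Q G} ≤
      2 * Set.ncard {G : Set (EuclideanSpace ℝ (Fin d)) | IsExposed ℝ Q G ∧ ¬ G ⊆ F} :=
  stmt_1_general S hS Q hQ F hF hFQ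
end

section
/- The bound φ̄ ≤ 2(φ−1) of the Lemma is tight for pyramids with the basis as special face: let S be a finite subset of ℝ^d, let a ∈ ℝ^d with a ∉ affineSpan ℝ S, and let Q = convexHull ℝ (insert a S) be the pyramid with apex a over the base B = convexHull ℝ S. Then the number of exposed faces of Q contained in B equals the number of exposed faces of Q not contained in B: Set.ncard {G | IsExposed ℝ Q G ∧ G ⊆ B} = Set.ncard {G | IsExposed ℝ Q G ∧ ¬ G ⊆ B}. -/
/-!
Choose a continuous linear height `ℓ` that equals `c` on the base `B` and exceeds `c` at the apex
`a`. Every point of the pyramid is `a`, a point of `B`, or lies on an open segment from `B` to `a`,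
at height strictly between `c` and `ℓ a`. Hence an exposed face that avoids `a` lies in `B`, and an
exposed face `G` containing `a` is the pyramid over the exposed face `G ∩ B`. Conversely the pyramid
over an exposed face `F ⊆ B` is exposed: tilt a functional exposing `F` by a multiple of `ℓ` until
it is also maximal at `a`. So `F ↦ convexHull ℝ (insert a F)` is a bijection from the exposed faces
inside `B` onto the others, with inverse `G ↦ G ∩ B`.
-/

open Set

theorem AffineSubspace.exists_continuousLinearMap_eq_on_lt {E : Type*} [AddCommGroup E]
    [Module ℝ E] [TopologicalSpace E] [IsTopologicalAddGroup E] [ContinuousSMul ℝ E]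
    [T2Space E] [FiniteDimensional ℝ E] {A : AffineSubspace ℝ E} {a : E} (ha : a ∉ A) :
    ∃ (ℓ : E →L[ℝ] ℝ) (c : ℝ), (∀ x ∈ A, ℓ x = c) ∧ c < ℓ a := by
  rcases (A : Set E).eq_empty_or_nonempty with hA | ⟨s, hs⟩
  · exact ⟨0, -1, fun x hx => (eq_empty_iff_forall_notMem.1 hA x hx).elim, by simp⟩
  have hdir : a - s ∉ A.direction := by
    rwa [← vsub_eq_sub, AffineSubspace.vsub_right_mem_direction_iff_mem hs]
  obtain ⟨f, hf, hfa⟩ := LinearMap.exists_extend_of_notMem (0 : A.direction →ₗ[ℝ] ℝ) hdir 1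
  have hf_dir : ∀ v ∈ A.direction, f v = 0 := fun v hv => by
    simpa using congr($hf ⟨v, hv⟩)
  refine ⟨LinearMap.toContinuousLinearMap f, f s, fun x hx => ?_, ?_⟩
  · simpa [sub_eq_zero] using hf_dir (x - s) (A.vsub_mem_direction hx hs)
  · simp only [LinearMap.coe_toContinuousLinearMap']
    linarith [show f a - f s = 1 by rw [← map_sub, hfa]]

section Pyramid

variable {E : Type*} [AddCommGroup E] [Module ℝ E] {a b x : E} {B F G : Set E}

theorem Convex.mem_convexHull_insert (hB : Convex ℝ B) (hx : x ∈ convexHull ℝ (insert a B)) :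
    x = a ∨ x ∈ B ∨ ∃ b ∈ B, x ∈ openSegment ℝ b a := by
  rcases B.eq_empty_or_nonempty with rfl | hBne
  · simpa using hx
  rw [convexHull_insert hBne, hB.convexHull_eq, mem_convexJoin] at hx
  obtain ⟨_, rfl, b, hb, hxab⟩ := hx
  rw [← insert_endpoints_openSegment, openSegment_symm] at hxab
  rcases hxab with rfl | rfl | hx
  · exact Or.inl rfl
  · exact Or.inr (Or.inl hb)
  · exact Or.inr (Or.inr ⟨b, hb, hx⟩)

theorem IsExtreme.mem_convexHull_insert (hB : Convex ℝ B)
    (hG : IsExtreme ℝ (convexHull ℝ (insert a B)) G) (hx : x ∈ G) :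
    x = a ∨ x ∈ B ∨ a ∈ G ∧ ∃ b ∈ G ∩ B, x ∈ openSegment ℝ b a := by
  rcases hB.mem_convexHull_insert (hG.subset hx) with rfl | hxB | ⟨b, hb, hxba⟩
  · exact Or.inl rfl
  · exact Or.inr (Or.inl hxB)
  have hbQ : b ∈ convexHull ℝ (insert a B) := subset_convexHull ℝ _ (mem_insert_of_mem a hb)
  have haQ : a ∈ convexHull ℝ (insert a B) := subset_convexHull ℝ _ (mem_insert a B)
  exact Or.inr <| Or.inr ⟨hG.right_mem_of_mem_openSegment hbQ haQ hx hxba,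
    b, ⟨hG.left_mem_of_mem_openSegment hbQ haQ hx hxba, hb⟩, hxba⟩

theorem IsExtreme.subset_of_notMem_convexHull_insert (hB : Convex ℝ B)
    (hG : IsExtreme ℝ (convexHull ℝ (insert a B)) G) (ha : a ∉ G) : G ⊆ B := by
  intro x hx
  rcases hG.mem_convexHull_insert hB hx with rfl | hxB | ⟨haG, -⟩
  exacts [(ha hx).elim, hxB, (ha haG).elim]

theorem IsExtreme.convexHull_insert_inter_eq (hB : Convex ℝ B)
    (hG : IsExtreme ℝ (convexHull ℝ (insert a B)) G) (hGc : Convex ℝ G) (ha : a ∈ G) :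
    convexHull ℝ (insert a (G ∩ B)) = G := by
  refine (convexHull_min (insert_subset ha inter_subset_left) hGc).antisymm fun x hx => ?_
  rcases hG.mem_convexHull_insert hB hx with rfl | hxB | ⟨-, b, hb, hxba⟩
  · exact subset_convexHull ℝ _ (mem_insert x _)
  · exact subset_convexHull ℝ _ (mem_insert_of_mem a ⟨hx, hxB⟩)
  · exact segment_subset_convexHull (mem_insert_of_mem a hb) (mem_insert a _)
      (openSegment_subset_segment ℝ b a hxba)

variable [TopologicalSpace E] {ℓ : E →L[ℝ] ℝ} {c : ℝ}

theorem ContinuousLinearMap.apply_mem_Ioo_of_mem_openSegment (hx : x ∈ openSegment ℝ b a)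
    (hc : ℓ b < ℓ a) : ℓ x ∈ Ioo (ℓ b) (ℓ a) := by
  rw [← openSegment_eq_Ioo hc]
  simpa using image_openSegment ℝ (ℓ : E →ₗ[ℝ] ℝ).toAffineMap b a ▸ mem_image_of_mem _ hx

theorem Convex.eq_or_mem_or_apply_mem_Ioo (hB : Convex ℝ B) (hℓ : ∀ y ∈ B, ℓ y = c)
    (hc : c < ℓ a) (hx : x ∈ convexHull ℝ (insert a B)) :
    x = a ∨ x ∈ B ∨ ℓ x ∈ Ioo c (ℓ a) := by
  rcases hB.mem_convexHull_insert hx with hxa | hxB | ⟨b, hb, hxba⟩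
  · exact Or.inl hxa
  · exact Or.inr (Or.inl hxB)
  · rw [← hℓ b hb] at hc ⊢
    exact Or.inr (Or.inr (ℓ.apply_mem_Ioo_of_mem_openSegment hxba hc))

theorem Convex.apply_mem_Icc_of_mem_convexHull_insert (hB : Convex ℝ B)
    (hℓ : ∀ y ∈ B, ℓ y = c) (hc : c < ℓ a) (hx : x ∈ convexHull ℝ (insert a B)) :
    ℓ x ∈ Icc c (ℓ a) := by
  rcases hB.eq_or_mem_or_apply_mem_Ioo hℓ hc hx with rfl | hxB | hxI
  exacts [⟨hc.le, le_rfl⟩, ⟨(hℓ x hxB).ge, (hℓ x hxB).trans_le hc.le⟩, Ioo_subset_Icc_self hxI]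

theorem Convex.mem_of_mem_convexHull_insert_of_apply_eq (hB : Convex ℝ B)
    (hℓ : ∀ y ∈ B, ℓ y = c) (hc : c < ℓ a) (hx : x ∈ convexHull ℝ (insert a B))
    (hxc : ℓ x = c) : x ∈ B := by
  rcases hB.eq_or_mem_or_apply_mem_Ioo hℓ hc hx with rfl | hxB | hxI
  exacts [(hc.ne hxc.symm).elim, hxB, (hxI.1.ne hxc.symm).elim]

theorem Convex.eq_of_mem_convexHull_insert_of_apply_eq (hB : Convex ℝ B)
    (hℓ : ∀ y ∈ B, ℓ y = c) (hc : c < ℓ a) (hx : x ∈ convexHull ℝ (insert a B))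
    (hxa : ℓ x = ℓ a) : x = a := by
  rcases hB.eq_or_mem_or_apply_mem_Ioo hℓ hc hx with rfl | hxB | hxI
  exacts [rfl, (hc.ne (hℓ x hxB ▸ hxa)).elim, (hxI.2.ne hxa).elim]

theorem Convex.isExposed_convexHull_insert_base (hB : Convex ℝ B) (hℓ : ∀ y ∈ B, ℓ y = c)
    (hc : c < ℓ a) : IsExposed ℝ (convexHull ℝ (insert a B)) B := by
  rintro ⟨b, hb⟩
  have hbQ := subset_convexHull ℝ _ (mem_insert_of_mem a hb)
  refine ⟨-ℓ, ext fun x => ⟨fun hxB => ⟨subset_convexHull ℝ _ (mem_insert_of_mem a hxB),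
    fun y hy => ?_⟩, fun ⟨hxQ, hx_min⟩ => ?_⟩⟩
  · simpa [hℓ x hxB] using (hB.apply_mem_Icc_of_mem_convexHull_insert hℓ hc hy).1
  · have hxb : ℓ x ≤ ℓ b := by simpa using hx_min b hbQ
    exact hB.mem_of_mem_convexHull_insert_of_apply_eq hℓ hc hxQ <|
      le_antisymm (hxb.trans_eq (hℓ b hb)) (hB.apply_mem_Icc_of_mem_convexHull_insert hℓ hc hxQ).1

theorem Convex.isExposed_convexHull_insert_apex (hB : Convex ℝ B) (hℓ : ∀ y ∈ B, ℓ y = c)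
    (hc : c < ℓ a) : IsExposed ℝ (convexHull ℝ (insert a B)) {a} := by
  have haQ := subset_convexHull ℝ _ (mem_insert a B)
  refine fun _ => ⟨ℓ, ext fun x => ⟨?_, fun ⟨hxQ, hx_max⟩ => ?_⟩⟩
  · rintro rfl
    exact ⟨haQ, fun y hy => (hB.apply_mem_Icc_of_mem_convexHull_insert hℓ hc hy).2⟩
  · exact hB.eq_of_mem_convexHull_insert_of_apply_eq hℓ hc hxQ <|
      le_antisymm (hB.apply_mem_Icc_of_mem_convexHull_insert hℓ hc hxQ).2 (hx_max a haQ)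

theorem Convex.convexHull_insert_inter_of_subset (hF : Convex ℝ F) (hFB : F ⊆ B)
    (hℓ : ∀ y ∈ B, ℓ y = c) (hc : c < ℓ a) : convexHull ℝ (insert a F) ∩ B = F := by
  refine Subset.antisymm (fun x ⟨hx, hxB⟩ => ?_) (subset_inter ((subset_insert a F).trans
    (subset_convexHull ℝ _)) hFB)
  exact hF.mem_of_mem_convexHull_insert_of_apply_eq (fun y hy => hℓ y (hFB hy)) hc hx (hℓ x hxB)

theorem exists_continuousLinearMap_apply_eq_add (hℓ : ∀ y ∈ B, ℓ y = c) (hc : ℓ a ≠ c)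
    (l : E →L[ℝ] ℝ) (m : ℝ) :
    ∃ (L : E →L[ℝ] ℝ) (k : ℝ), L a = m + k ∧ ∀ y ∈ B, L y = l y + k := by
  set μ := (m - l a) / (ℓ a - c)
  refine ⟨l + μ • ℓ, μ * c, ?_, fun y hy => ?_⟩
  · simp only [add_apply, smul_apply, smul_eq_mul, μ]
    field_simp [sub_ne_zero.2 hc]
    ring
  · simp [hℓ y hy]

theorem Convex.isExposed_convexHull_insert_of_isExposed (hB : Convex ℝ B)
    (hℓ : ∀ y ∈ B, ℓ y = c) (hc : c < ℓ a) (hF : IsExposed ℝ (convexHull ℝ (insert a B)) F)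
    (hFB : F ⊆ B) : IsExposed ℝ (convexHull ℝ (insert a B)) (convexHull ℝ (insert a F)) := by
  set Q := convexHull ℝ (insert a B)
  have haQ : a ∈ Q := subset_convexHull ℝ _ (mem_insert a B)
  have hBQ : B ⊆ Q := (subset_insert a B).trans (subset_convexHull ℝ _)
  rcases F.eq_empty_or_nonempty with rfl | ⟨f, hf⟩
  · simpa using hB.isExposed_convexHull_insert_apex hℓ hc
  obtain ⟨l, rfl⟩ := hF ⟨f, hf⟩
  have hl_max : ∀ y ∈ Q, l y ≤ l f := hf.2
  obtain ⟨L, k, hLa, hLB⟩ := exists_continuousLinearMap_apply_eq_add hℓ hc.ne' l (l f)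
  have hL_max : Q ⊆ {y | L y ≤ L a} := by
    refine convexHull_min (insert_subset (le_refl (L a)) fun y hy => ?_)
      (convex_halfSpace_le L.toLinearMap.isLinear (L a))
    rw [mem_ofPred_eq, hLB y hy, hLa]
    exact add_le_add_left (hl_max y (hBQ hy)) k
  set G := {x ∈ Q | ∀ y ∈ Q, L y ≤ L x}
  have hG : IsExposed ℝ Q G := fun _ => ⟨L, rfl⟩
  have hGB : G ∩ B = {x ∈ Q | ∀ y ∈ Q, l y ≤ l x} := by
    ext x
    refine ⟨fun ⟨⟨hxQ, hx_max⟩, hxB⟩ => ⟨hxQ, fun y hy => ?_⟩,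
      fun hxF => ⟨⟨hxF.1, fun y hy => ?_⟩, hFB hxF⟩⟩
    · have hfx := hx_max f hf.1
      rw [hLB f (hFB hf), hLB x hxB] at hfx
      linarith [hl_max y hy]
    · rw [hLB x (hFB hxF)]
      linarith [show L y ≤ L a from hL_max hy, hxF.2 f hf.1]
  rw [← hGB, hG.isExtreme.convexHull_insert_inter_eq hB (hG.convex (convex_convexHull ℝ _))
    ⟨haQ, hL_max⟩]
  exact hG

theorem Convex.ncard_isExposed_subset_eq_ncard_isExposed_not_subset (hB : Convex ℝ B)
    (hℓ : ∀ y ∈ B, ℓ y = c) (hc : c < ℓ a) :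
    {G | IsExposed ℝ (convexHull ℝ (insert a B)) G ∧ G ⊆ B}.ncard =
      {G | IsExposed ℝ (convexHull ℝ (insert a B)) G ∧ ¬ G ⊆ B}.ncard := by
  set Q := convexHull ℝ (insert a B)
  have hQ : Convex ℝ Q := convex_convexHull ℝ _
  have haB : a ∉ B := fun h => hc.ne' (hℓ a h)
  have hinj : InjOn (fun F => convexHull ℝ (insert a F)) {G | IsExposed ℝ Q G ∧ G ⊆ B} := by
    rintro F₁ ⟨hF₁, hF₁B⟩ F₂ ⟨hF₂, hF₂B⟩ h
    rw [← (hF₁.convex hQ).convexHull_insert_inter_of_subset hF₁B hℓ hc,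
      ← (hF₂.convex hQ).convexHull_insert_inter_of_subset hF₂B hℓ hc]
    exact congrArg (· ∩ B) h
  have himg : (fun F => convexHull ℝ (insert a F)) '' {G | IsExposed ℝ Q G ∧ G ⊆ B} =
      {G | IsExposed ℝ Q G ∧ ¬ G ⊆ B} := by
    ext G
    refine ⟨?_, fun ⟨hG, hGB⟩ => ?_⟩
    · rintro ⟨F, ⟨hF, hFB⟩, rfl⟩
      exact ⟨hB.isExposed_convexHull_insert_of_isExposed hℓ hc hF hFB,
        fun h => haB (h (subset_convexHull ℝ _ (mem_insert a F)))⟩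
    · have haG : a ∈ G := by_contra fun h =>
        hGB (hG.isExtreme.subset_of_notMem_convexHull_insert hB h)
      exact ⟨G ∩ B, ⟨hG.inter (hB.isExposed_convexHull_insert_base hℓ hc), inter_subset_right⟩,
        hG.isExtreme.convexHull_insert_inter_eq hB (hG.convex hQ) haG⟩
  rw [← himg, hinj.ncard_image]

end Pyramid

theorem stmt_2_general {d : ℕ} (S : Set (EuclideanSpace ℝ (Fin d)))
    (a : EuclideanSpace ℝ (Fin d)) (ha : a ∉ affineSpan ℝ S)
    (Q B : Set (EuclideanSpace ℝ (Fin d)))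
    (hQ : Q = convexHull ℝ (insert a S)) (hB : B = convexHull ℝ S) :
    Set.ncard {G : Set (EuclideanSpace ℝ (Fin d)) | IsExposed ℝ Q G ∧ G ⊆ B} =
      Set.ncard {G : Set (EuclideanSpace ℝ (Fin d)) | IsExposed ℝ Q G ∧ ¬ G ⊆ B} := by
  obtain ⟨ℓ, c, hℓ, hc⟩ := AffineSubspace.exists_continuousLinearMap_eq_on_lt ha
  have hQB : Q = convexHull ℝ (insert a B) := by
    rw [hQ, hB, insert_eq, insert_eq, convexHull_convexHull_union_right]
  subst hQB hB
  exact (convex_convexHull ℝ S).ncard_isExposed_subset_eq_ncard_isExposed_not_subset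
    (fun x hx => hℓ x (convexHull_subset_affineSpan S hx)) hc

/-- For a pyramid `Q` with apex `a` over base `B = convexHull ℝ S`
(`a ∉ affineSpan ℝ S`), the number of exposed faces of `Q` contained in `B` equals
the number of exposed faces of `Q` not contained in `B`. -/
theorem stmt_2 {d : ℕ} (S : Set (EuclideanSpace ℝ (Fin d))) (hS : S.Finite)
    (a : EuclideanSpace ℝ (Fin d)) (ha : a ∉ affineSpan ℝ S)
    (Q B : Set (EuclideanSpace ℝ (Fin d)))
    (hQ : Q = convexHull ℝ (insert a S)) (hB : B = convexHull ℝ S) :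
    Set.ncard {G : Set (EuclideanSpace ℝ (Fin d)) | IsExposed ℝ Q G ∧ G ⊆ B} =
      Set.ncard {G : Set (EuclideanSpace ℝ (Fin d)) | IsExposed ℝ Q G ∧ ¬ G ⊆ B} :=
  stmt_2_general S a ha Q B hQ hB
end

section
/- If 0 is a vertex of a polyhedron, the polyhedron can be mapped into the nonnegative orthant by a linear isomorphism: let P = {x ∈ ℝ^d : ∀ i ∈ Fin m, ⟪a i, x⟫ ≤ b i} with a : Fin m → ℝ^d, b : Fin m → ℝ, and suppose 0 is an extreme point of P. Then there exists a linear equivalence L : ℝ^d ≃ₗ[ℝ] ℝ^d such that for every x ∈ P and every coordinate j, 0 ≤ (L x) j. (This is the step ρ∘τ in the paper's construction of the projective closure: among the constraints active at the vertex one can choose a dual basis, and the corresponding linear transformation maps P into the positive orthant.) -/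
open scoped RealInnerProductSpace
open Filter Topology Module

/-!
At a vertex `x` of `P = {y | ∀ i, ⟪a i, y⟫ ≤ b i}` the normals of the active constraints span the
space: a direction `v` orthogonal to all of them keeps `x ± t • v` in `P` for small `t > 0`, and
then `x` is the midpoint of a segment in `P`. At the vertex `0` the active constraints are those
with `b i = 0`; choosing a basis `c` among their normals, `y ↦ (-⟪c j, y⟫)_j` is a linear
isomorphism, and each of its coordinates is `≥ -b i = 0` on `P`.
-/

theorem eq_zero_of_mem_extremePoints_of_eventually_add_smul_mem {E : Type*} [AddCommGroup E]
    [Module ℝ E] {s : Set E} {x v : E} (hx : x ∈ s.extremePoints ℝ)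
    (hv : ∀ᶠ t in 𝓝 (0 : ℝ), x + t • v ∈ s) : v = 0 := by
  have hv_neg : ∀ᶠ t in 𝓝 (0 : ℝ), x + (-t) • v ∈ s :=
    (continuous_neg.tendsto' (0 : ℝ) 0 neg_zero).eventually hv
  obtain ⟨t, ⟨hpos, hneg⟩, ht⟩ :=
    (((hv.and hv_neg).filter_mono nhdsWithin_le_nhds).and
      (self_mem_nhdsWithin : Set.Ioi (0 : ℝ) ∈ 𝓝[>] 0)).exists
  have hseg : x ∈ openSegment ℝ (x + t • v) (x + (-t) • v) :=
    ⟨1 / 2, 1 / 2, by norm_num, by norm_num, by norm_num, by module⟩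
  have htv : t • v = 0 := by simpa using hx.2 hpos hneg hseg
  exact (smul_eq_zero.mp htv).resolve_left (ne_of_gt ht)

section Polyhedron

variable {E ι : Type*} [NormedAddCommGroup E] [InnerProductSpace ℝ E] [Finite ι]
  {a : ι → E} {b : ι → ℝ} {x : E}

theorem eventually_forall_inner_add_smul_le (hx : ∀ i, ⟪a i, x⟫ ≤ b i) {v : E}
    (hv : ∀ i, ⟪a i, x⟫ = b i → ⟪a i, v⟫ = 0) :
    ∀ᶠ t in 𝓝 (0 : ℝ), ∀ i, ⟪a i, x + t • v⟫ ≤ b i := by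
  refine eventually_all.2 fun i => ?_
  rcases (hx i).eq_or_lt with hact | hlt
  · exact Eventually.of_forall fun t => by
      simp [inner_add_right, real_inner_smul_right, hact, hv i hact]
  · have hcont : Continuous fun t : ℝ => ⟪a i, x + t • v⟫ := by fun_prop
    exact (hcont.continuousAt.eventually_lt continuousAt_const (by simpa using hlt)).mono
      fun _ => le_of_lt

theorem span_active_eq_top_of_mem_extremePoints [FiniteDimensional ℝ E]
    (hx : x ∈ {y : E | ∀ i, ⟪a i, y⟫ ≤ b i}.extremePoints ℝ) :
    Submodule.span ℝ (a '' {i | ⟪a i, x⟫ = b i}) = ⊤ := by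
  rw [← Submodule.orthogonal_eq_bot_iff, Submodule.eq_bot_iff]
  intro v hv
  refine eq_zero_of_mem_extremePoints_of_eventually_add_smul_mem hx
    (eventually_forall_inner_add_smul_le hx.1 fun i hi => ?_)
  exact (Submodule.mem_orthogonal _ v).mp hv _ (Submodule.subset_span ⟨i, hi, rfl⟩)

end Polyhedron

theorem Module.Basis.exists_forall_mem_of_span_eq_top {K V ι : Type*} [Field K] [AddCommGroup V]
    [Module K V] [FiniteDimensional K V] [Fintype ι] (hι : Fintype.card ι = finrank K V)
    {S : Set V} (hS : Submodule.span K S = ⊤) : ∃ c : Basis ι K V, ∀ j, c j ∈ S := by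
  let B := Basis.ofSpan hS.ge
  have : Fintype _ := FiniteDimensional.fintypeBasisIndex B
  let e : _ ≃ ι := Fintype.equivOfCardEq (by rw [← finrank_eq_card_basis B, hι])
  exact ⟨B.reindex e, fun j => by
    simpa [B] using Basis.ofSpan_subset hS.ge (Set.mem_range_self (e.symm j))⟩

namespace Module.Basis

variable {E ι : Type*} [NormedAddCommGroup E] [InnerProductSpace ℝ E] (c : Basis ι ℝ E)

theorem injective_pi_innerₗ : Function.Injective (LinearMap.pi fun j => innerₗ E (c j)) := by
  refine (injective_iff_map_eq_zero _).2 fun x hx =>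
    InnerProductSpace.ext_inner_left_basis c fun j => ?_
  simpa using congr_fun hx j

noncomputable def innerCoordsEquiv [FiniteDimensional ℝ E] [Fintype ι] : E ≃ₗ[ℝ] (ι → ℝ) :=
  (LinearMap.pi fun j => innerₗ E (c j)).linearEquivOfInjective c.injective_pi_innerₗ
    (by simp [finrank_eq_card_basis c])

end Module.Basis

/-- If `0` is a vertex of the polyhedron `P`, then some linear
isomorphism of `ℝ^d` maps `P` into the nonnegative orthant. -/
theorem stmt_4 {d m : ℕ} (a : Fin m → EuclideanSpace ℝ (Fin d)) (b : Fin m → ℝ)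
    (P : Set (EuclideanSpace ℝ (Fin d)))
    (hP : P = {x : EuclideanSpace ℝ (Fin d) | ∀ i : Fin m, ⟪a i, x⟫ ≤ b i})
    (h0 : (0 : EuclideanSpace ℝ (Fin d)) ∈ Set.extremePoints ℝ P) :
    ∃ L : EuclideanSpace ℝ (Fin d) ≃ₗ[ℝ] EuclideanSpace ℝ (Fin d),
      ∀ x ∈ P, ∀ j : Fin d, 0 ≤ L x j := by
  subst hP
  obtain ⟨c, hc⟩ := Basis.exists_forall_mem_of_span_eq_top (ι := Fin d) (by simp)
    (span_active_eq_top_of_mem_extremePoints h0)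
  refine ⟨c.innerCoordsEquiv.trans ((LinearEquiv.neg ℝ).trans
    (EuclideanSpace.equiv (Fin d) ℝ).symm.toLinearEquiv), fun x hx j => ?_⟩
  obtain ⟨i, hi, hci⟩ := hc j
  have hbi : b i = 0 := by simpa using hi.symm
  change 0 ≤ -⟪c j, x⟫
  linarith [hci ▸ hx i]
end

section
/- The dwarfed d-cube D̄ = {x ∈ ℝ^d : (∀ i, 0 ≤ x i ∧ x i ≤ 1) ∧ Σ_i x i ≤ 3/2} has exactly d² + 1 vertices for d ≥ 2: its set of extreme points is exactly {0} ∪ {e i : i ∈ Fin d} ∪ {e i + (1/2) • e j : i j ∈ Fin d, i ≠ j}, where e i denotes the i-th standard basis vector, and this set has cardinality d² + 1. -/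
/-!
A point `x` of a convex set is extreme iff the only `w` with `x + w` and `x - w` both in the set
is `w = 0`. For the dwarfed cube, `x ± w` stays inside iff `|w k| ≤ min (x k) (1 - x k)` for all
`k` and `|∑ w| ≤ 3/2 - ∑ x`. Hence `x` is a vertex iff at most one coordinate of `x` lies in
`(0, 1)` and, if one does, the constraint `∑ x ≤ 3/2` is tight: two fractional coordinates allow
the perturbation `ε (eᵢ - eⱼ)`, one fractional coordinate with slack in the sum allows `ε eⱼ`.
A `0/1`-vector with at most one fractional entry and coordinate sum `≤ 3/2` is `0`, some `eᵢ`,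
or, when the sum is `3/2`, some `eᵢ + ½ eⱼ`. These `1 + d + d (d - 1)` points are distinct, as
their coordinate sums `0, 1, 3/2` and their supports show.
-/

open Finset

theorem Convex.mem_extremePoints_iff_forall_add_sub_mem {𝕜 E : Type*} [Field 𝕜] [LinearOrder 𝕜]
    [IsStrictOrderedRing 𝕜] [AddCommGroup E] [Module 𝕜 E] {A : Set E} {x : E}
    (hA : Convex 𝕜 A) :
    x ∈ A.extremePoints 𝕜 ↔ x ∈ A ∧ ∀ w, x + w ∈ A → x - w ∈ A → w = 0 := by
  refine ⟨fun hx => ⟨hx.1, fun w h₁ h₂ => ?_⟩, fun ⟨hxA, h⟩ => ?_⟩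
  · have hseg : x ∈ openSegment 𝕜 (x + w) (x - w) :=
      ⟨1 / 2, 1 / 2, by norm_num, by norm_num, by norm_num, by module⟩
    simpa using (mem_extremePoints_iff_left.1 hx).2 _ h₁ _ h₂ hseg
  refine mem_extremePoints_iff_left.2 ⟨hxA, fun x₁ h₁ x₂ h₂ ⟨a, b, ha, hb, hab, hx⟩ => ?_⟩
  suffices key : ∀ y₁ ∈ A, ∀ y₂ ∈ A, ∀ s t : 𝕜, 0 < s → s ≤ t → s + t = 1 →
      s • y₁ + t • y₂ = x → y₁ = y₂ by
    have : x₁ = x₂ := by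
      rcases le_total a b with hle | hle
      · exact key x₁ h₁ x₂ h₂ a b ha hle hab hx
      · exact (key x₂ h₂ x₁ h₁ b a hb hle (by rw [add_comm, hab]) (by rw [add_comm, hx])).symm
    rw [← hx, ← this, Convex.combo_self hab]
  rintro y₁ hy₁ y₂ hy₂ s t hs hle hst rfl
  -- As `s ≤ t`, `x` is the midpoint of `y₂` and `(2 * s) • y₁ + (t - s) • y₂ ∈ [y₁, y₂]`.
  have hplus : (s • y₁ + t • y₂) + s • (y₁ - y₂) = (2 * s) • y₁ + (t - s) • y₂ := by module
  have hminus : (s • y₁ + t • y₂) - s • (y₁ - y₂) = y₂ := by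
    linear_combination (norm := module) hst • y₂
  have hw := h (s • (y₁ - y₂))
    (hplus ▸ hA hy₁ hy₂ (by positivity) (by linarith) (by linear_combination hst))
    (by rwa [hminus])
  exact sub_eq_zero.1 ((smul_eq_zero.1 hw).resolve_left hs.ne')

variable {ι : Type*} [Fintype ι] {x : EuclideanSpace ℝ ι}

variable (ι) in
def dwarfedCube : Set (EuclideanSpace ℝ ι) :=
  {x | (∀ i, 0 ≤ x i ∧ x i ≤ 1) ∧ ∑ i, x i ≤ 3 / 2}

theorem convex_dwarfedCube : Convex ℝ (dwarfedCube ι) := by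
  rintro x ⟨hx, hxs⟩ y ⟨hy, hys⟩ a b ha hb hab
  refine ⟨fun i => ?_, ?_⟩
  · simp only [PiLp.add_apply, PiLp.smul_apply, smul_eq_mul]
    constructor <;> nlinarith [hx i, hy i]
  · simp only [PiLp.add_apply, PiLp.smul_apply, smul_eq_mul, sum_add_distrib, ← mul_sum]
    nlinarith

theorem eq_zero_or_eq_one_of_mem_dwarfedCube (hx : x ∈ dwarfedCube ι) {k : ι}
    (hk : x k ∉ Set.Ioo 0 1) : x k = 0 ∨ x k = 1 :=
  (Set.eq_endpoints_or_mem_Ioo_of_mem_Icc (hx.1 k)).imp_right (·.resolve_right hk)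

theorem add_mem_and_sub_mem_dwarfedCube_iff {w : EuclideanSpace ℝ ι} :
    x + w ∈ dwarfedCube ι ∧ x - w ∈ dwarfedCube ι ↔
      (∀ k, |w k| ≤ x k ∧ |w k| ≤ 1 - x k) ∧ |∑ k, w k| ≤ 3 / 2 - ∑ k, x k := by
  simp only [dwarfedCube, Set.mem_ofPred_eq, PiLp.add_apply, PiLp.sub_apply, sum_add_distrib,
    sum_sub_distrib, abs_le]
  constructor
  · rintro ⟨⟨h₁, hs₁⟩, h₂, hs₂⟩
    exact ⟨fun k => by constructor <;> constructor <;> linarith [h₁ k, h₂ k],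
      by constructor <;> linarith⟩
  · rintro ⟨h, hs₁, hs₂⟩
    exact ⟨⟨fun k => by constructor <;> linarith [h k], by linarith⟩,
      fun k => by constructor <;> linarith [h k], by linarith⟩

theorem mem_extremePoints_dwarfedCube_iff_forall_perturbation :
    x ∈ (dwarfedCube ι).extremePoints ℝ ↔ x ∈ dwarfedCube ι ∧
      ∀ w : EuclideanSpace ℝ ι, (∀ k, |w k| ≤ x k ∧ |w k| ≤ 1 - x k) →
        |∑ k, w k| ≤ 3 / 2 - ∑ k, x k → w = 0 := by
  rw [convex_dwarfedCube.mem_extremePoints_iff_forall_add_sub_mem]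
  refine and_congr_right fun _ => forall_congr' fun w => ?_
  rw [← and_imp, ← and_imp, add_mem_and_sub_mem_dwarfedCube_iff]

theorem le_half_of_mem_dwarfedCube_of_eq_one (hx : x ∈ dwarfedCube ι) {i k : ι} (hi : x i = 1)
    (hki : k ≠ i) : x k ≤ 1 / 2 := by
  have := add_le_sum (fun l _ => (hx.1 l).1) (mem_univ i) (mem_univ k) hki.symm
  linarith [hx.2]

variable [DecidableEq ι]

theorem subsingleton_fractional_of_mem_extremePoints_dwarfedCube
    (hx : x ∈ (dwarfedCube ι).extremePoints ℝ) : {k | x k ∈ Set.Ioo 0 1}.Subsingleton := by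
  obtain ⟨⟨hx01, hsum⟩, hw⟩ := mem_extremePoints_dwarfedCube_iff_forall_perturbation.1 hx
  rintro i ⟨hi₀, hi₁⟩ j ⟨hj₀, hj₁⟩
  by_contra hij
  set ε := min (min (x i) (1 - x i)) (min (x j) (1 - x j))
  have hε : 0 < ε := by simp only [ε, lt_min_iff]; constructor <;> constructor <;> linarith
  have hεi : ε ≤ x i ∧ ε ≤ 1 - x i := by simp [ε]
  have hεj : ε ≤ x j ∧ ε ≤ 1 - x j := by simp [ε]
  have hwk : ∀ k, (EuclideanSpace.single i ε - EuclideanSpace.single j ε) k =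
      if k = i then ε else if k = j then -ε else 0 := by
    intro k; split_ifs <;> simp_all [Ne.symm hij]
  have hw0 := hw (EuclideanSpace.single i ε - EuclideanSpace.single j ε) (fun k => ?_) ?_
  · simpa [hε.ne', hij] using congrArg (· i) hw0
  · rw [hwk]
    split_ifs with hki hkj
    · subst hki; simpa [abs_of_pos hε] using hεi
    · subst hkj; simpa [abs_of_pos hε] using hεj
    · simpa using hx01 k
  · simpa using hsum

theorem sum_eq_of_mem_extremePoints_dwarfedCube (hx : x ∈ (dwarfedCube ι).extremePoints ℝ)
    {j : ι} (hj : x j ∈ Set.Ioo 0 1) : ∑ k, x k = 3 / 2 := by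
  obtain ⟨⟨hx01, hsum⟩, hw⟩ := mem_extremePoints_dwarfedCube_iff_forall_perturbation.1 hx
  by_contra hne
  set ε := min (min (x j) (1 - x j)) (3 / 2 - ∑ k, x k)
  have hε : 0 < ε := by
    simp only [ε, lt_min_iff]
    exact ⟨⟨hj.1, by linarith [hj.2]⟩, sub_pos.2 (lt_of_le_of_ne hsum hne)⟩
  have hεj : ε ≤ x j ∧ ε ≤ 1 - x j := by simp [ε]
  have hw0 := hw (EuclideanSpace.single j ε) (fun k => ?_) ?_
  · simpa [hε.ne'] using congrArg (· j) hw0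
  · rcases eq_or_ne k j with rfl | hkj
    · simpa [abs_of_pos hε] using hεj
    · simpa [hkj] using hx01 k
  · simp [abs_of_pos hε, ε]

theorem mem_extremePoints_dwarfedCube_iff : x ∈ (dwarfedCube ι).extremePoints ℝ ↔
    x ∈ dwarfedCube ι ∧ {k | x k ∈ Set.Ioo 0 1}.Subsingleton ∧
      ∀ j, x j ∈ Set.Ioo 0 1 → ∑ k, x k = 3 / 2 := by
  refine ⟨fun hx => ⟨hx.1, subsingleton_fractional_of_mem_extremePoints_dwarfedCube hx,
    fun _ => sum_eq_of_mem_extremePoints_dwarfedCube hx⟩, fun ⟨hx, hfrac, htight⟩ => ?_⟩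
  refine mem_extremePoints_dwarfedCube_iff_forall_perturbation.2 ⟨hx, fun w hw hsum => ?_⟩
  have hw0 : ∀ k, x k ∉ Set.Ioo 0 1 → w k = 0 := by
    intro k hk
    obtain ⟨hwk₀, hwk₁⟩ := hw k
    rcases eq_zero_or_eq_one_of_mem_dwarfedCube hx hk with hxk | hxk <;>
      exact abs_nonpos_iff.1 (by linarith)
  ext k
  by_cases hk : x k ∈ Set.Ioo 0 1
  · have hsum' : ∑ l, w l = w k :=
      Fintype.sum_eq_single k fun l hl => hw0 l fun hl' => hl (hfrac hl' hk)
    rw [hsum', htight k hk, sub_self] at hsum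
    simpa using abs_nonpos_iff.1 hsum
  · simpa using hw0 k hk

variable (ι) in
def dwarfedCubeVertices : Set (EuclideanSpace ℝ ι) :=
  {0} ∪ {x | ∃ i : ι, x = EuclideanSpace.single i (1 : ℝ)} ∪
    {x | ∃ i j : ι, i ≠ j ∧
      x = EuclideanSpace.single i (1 : ℝ) + (1 / 2 : ℝ) • EuclideanSpace.single j (1 : ℝ)}

theorem mem_dwarfedCubeVertices_of_fractional_of_eq_one (hx : x ∈ dwarfedCube ι)
    (hfrac : {k | x k ∈ Set.Ioo 0 1}.Subsingleton)
    (htight : ∀ j, x j ∈ Set.Ioo 0 1 → ∑ k, x k = 3 / 2) {i : ι} (hi : x i = 1) :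
    x ∈ dwarfedCubeVertices ι := by
  have hzero : ∀ k ≠ i, x k ∉ Set.Ioo 0 1 → x k = 0 := fun k hki hk =>
    (eq_zero_or_eq_one_of_mem_dwarfedCube hx hk).resolve_right
      (by linarith [le_half_of_mem_dwarfedCube_of_eq_one hx hi hki])
  by_cases hj : ∃ j, x j ∈ Set.Ioo 0 1
  · obtain ⟨j, hj⟩ := hj
    have hij : i ≠ j := by rintro rfl; linarith [hj.2]
    have hothers : ∀ k, k ≠ i ∧ k ≠ j → x k = 0 :=
      fun k hk => hzero k hk.1 fun hk' => hk.2 (hfrac hk' hj)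
    have hxj : x j = 1 / 2 := by
      have := htight j hj
      rw [Fintype.sum_eq_add i j hij hothers] at this
      linarith
    refine .inr ⟨i, j, hij, ?_⟩
    ext k
    by_cases hki : k = i
    · subst hki; simp [hi, hij]
    by_cases hkj : k = j
    · subst hkj; simp [hxj, hki]
    · simp [hothers k ⟨hki, hkj⟩, hki, hkj]
  · push Not at hj
    refine .inl (.inr ⟨i, ?_⟩)
    ext k
    by_cases hki : k = i
    · subst hki; simp [hi]
    · simp [hzero k hki (hj k), hki]

theorem mem_dwarfedCubeVertices_of_fractional (hx : x ∈ dwarfedCube ι)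
    (hfrac : {k | x k ∈ Set.Ioo 0 1}.Subsingleton)
    (htight : ∀ j, x j ∈ Set.Ioo 0 1 → ∑ k, x k = 3 / 2) : x ∈ dwarfedCubeVertices ι := by
  by_cases hone : ∃ i, x i = 1
  · obtain ⟨i, hi⟩ := hone
    exact mem_dwarfedCubeVertices_of_fractional_of_eq_one hx hfrac htight hi
  push Not at hone
  have hzero : ∀ k, x k ∉ Set.Ioo 0 1 → x k = 0 := fun k hk =>
    (eq_zero_or_eq_one_of_mem_dwarfedCube hx hk).resolve_right (hone k)
  by_cases hj : ∃ j, x j ∈ Set.Ioo 0 1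
  · obtain ⟨j, hj⟩ := hj
    have := htight j hj
    rw [Fintype.sum_eq_single j fun k hkj => hzero k fun hk => hkj (hfrac hk hj)] at this
    linarith [hj.2]
  · push Not at hj
    exact .inl (.inl (by ext k; simp [hzero k (hj k)]))

theorem dwarfedCubeVertices_subset_extremePoints :
    dwarfedCubeVertices ι ⊆ (dwarfedCube ι).extremePoints ℝ := by
  have of_integral : ∀ x ∈ dwarfedCube ι, (∀ k, x k ∉ Set.Ioo 0 1) →
      x ∈ (dwarfedCube ι).extremePoints ℝ := fun x hx h =>
    mem_extremePoints_dwarfedCube_iff.2 ⟨hx, fun k hk => (h k hk).elim, fun j hj => (h j hj).elim⟩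
  rintro _ ((rfl | ⟨i, rfl⟩) | ⟨i, j, hij, rfl⟩)
  · exact of_integral 0 ⟨fun k => by simp, by norm_num⟩ fun k => by simp
  · refine of_integral _ ⟨fun k => ?_, by norm_num⟩ fun k => ?_ <;>
      by_cases hki : k = i <;> simp [hki]
  set v := EuclideanSpace.single i (1 : ℝ) + (1 / 2 : ℝ) • EuclideanSpace.single j (1 : ℝ)
  have hv : ∀ k, v k = if k = i then 1 else if k = j then 1 / 2 else 0 := by
    intro k; split_ifs with hki hkj <;> simp [v, *, Ne.symm hij]
  have hsum : ∑ k, v k = 3 / 2 := by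
    rw [Fintype.sum_eq_add i j hij fun k hk => by simp [hv, hk.1, hk.2], hv, hv,
      if_pos rfl, if_neg hij.symm, if_pos rfl]
    norm_num
  have hfrac : ∀ k, v k ∈ Set.Ioo 0 1 → k = j := by
    intro k hk; rw [hv] at hk; split_ifs at hk <;> norm_num at hk; assumption
  refine mem_extremePoints_dwarfedCube_iff.2 ⟨⟨fun k => ?_, hsum.le⟩,
    fun a ha b hb => (hfrac a ha).trans (hfrac b hb).symm, fun _ _ => hsum⟩
  rw [hv]; split_ifs <;> norm_num

theorem extremePoints_dwarfedCube :
    (dwarfedCube ι).extremePoints ℝ = dwarfedCubeVertices ι := by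
  refine subset_antisymm (fun x hx => ?_) dwarfedCubeVertices_subset_extremePoints
  obtain ⟨hxD, hfrac, htight⟩ := mem_extremePoints_dwarfedCube_iff.1 hx
  exact mem_dwarfedCubeVertices_of_fractional hxD hfrac htight

theorem injOn_single_add_half_smul_single :
    Set.InjOn (fun p : ι × ι => EuclideanSpace.single p.1 (1 : ℝ) +
      (1 / 2 : ℝ) • EuclideanSpace.single p.2 (1 : ℝ)) (univ.offDiag : Finset (ι × ι)) := by
  rintro ⟨i, j⟩ hij ⟨i', j'⟩ - h
  replace hij : i ≠ j := (mem_offDiag.1 hij).2.2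
  have hi := congrArg (· i) h
  have hj := congrArg (· j) h
  simp only [PiLp.add_apply, PiLp.smul_apply, PiLp.single_apply, smul_eq_mul, if_pos, if_neg hij,
    if_neg hij.symm, mul_ite, mul_one, mul_zero, add_zero, zero_add] at hi hj
  obtain rfl : i = i' := by
    by_contra hne
    rw [if_neg hne] at hi
    split_ifs at hi <;> norm_num at hi
  obtain rfl : j = j' := by
    by_contra hne
    rw [if_neg hij.symm, if_neg hne] at hj
    norm_num at hj
  rfl

theorem ncard_dwarfedCubeVertices :
    (dwarfedCubeVertices ι).ncard = Fintype.card ι ^ 2 + 1 := by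
  set e : ι → EuclideanSpace ℝ ι := fun i => EuclideanSpace.single i 1
  set f : ι × ι → EuclideanSpace ℝ ι := fun p => e p.1 + (1 / 2 : ℝ) • e p.2
  have he : Function.Injective e := fun i j h => by
    simpa [e] using congrArg (· i) h
  have hf : Set.InjOn f (univ.offDiag : Finset (ι × ι)) := injOn_single_add_half_smul_single
  have hsum_e : ∀ i, ∑ k, e i k = 1 := by simp [e]
  have hsum_f : ∀ p, ∑ k, f p k = 3 / 2 := fun p => by norm_num [f, e, sum_add_distrib]
  have hV : dwarfedCubeVertices ι =
      {0} ∪ Set.range e ∪ f '' (univ.offDiag : Finset (ι × ι)) := by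
    ext x; simp [dwarfedCubeVertices, e, f, eq_comm]
  have hdisj₁ : Disjoint ({0} : Set (EuclideanSpace ℝ ι)) (Set.range e) := by
    rw [Set.disjoint_singleton_left]
    rintro ⟨i, hi⟩
    simpa [hi] using hsum_e i
  have hdisj₂ : Disjoint ({0} ∪ Set.range e) (f '' (univ.offDiag : Finset (ι × ι))) := by
    rw [Set.disjoint_left]
    rintro _ (rfl | ⟨i, rfl⟩) ⟨p, -, hfp⟩ <;> have := hsum_f p <;>
      norm_num [hfp, hsum_e] at this
  rw [hV, Set.ncard_union_eq hdisj₂, Set.ncard_union_eq hdisj₁, Set.ncard_singleton,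
    Set.ncard_range_of_injective he, hf.ncard_image, Set.ncard_coe_finset, offDiag_card,
    card_univ, Nat.card_eq_fintype_card]
  have := Nat.le_mul_self (Fintype.card ι)
  rw [sq]; omega

theorem stmt_10_general (d : ℕ)
    (D : Set (EuclideanSpace ℝ (Fin d)))
    (hD : D = {x : EuclideanSpace ℝ (Fin d) |
      (∀ i, 0 ≤ x i ∧ x i ≤ 1) ∧ ∑ i, x i ≤ 3 / 2}) :
    Set.extremePoints ℝ D =
      ({0} ∪ {x | ∃ i : Fin d, x = EuclideanSpace.single i (1 : ℝ)} ∪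
        {x | ∃ i j : Fin d, i ≠ j ∧
          x = EuclideanSpace.single i (1 : ℝ) +
            (1 / 2 : ℝ) • EuclideanSpace.single j (1 : ℝ)}) ∧
      (Set.extremePoints ℝ D).ncard = d ^ 2 + 1 := by
  have hV : Set.extremePoints ℝ D = dwarfedCubeVertices (Fin d) := by
    subst hD
    exact extremePoints_dwarfedCube
  exact ⟨hV, by rw [hV, ncard_dwarfedCubeVertices, Fintype.card_fin]⟩

/-- For `d ≥ 2`, the dwarfed `d`-cube
`D̄ = {x ∈ [0,1]^d : Σ xᵢ ≤ 3/2}` has vertex set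
`{0} ∪ {eᵢ} ∪ {eᵢ + ½ eⱼ : i ≠ j}`, of cardinality `d² + 1`. -/
theorem stmt_10 (d : ℕ) (hd : 2 ≤ d)
    (D : Set (EuclideanSpace ℝ (Fin d)))
    (hD : D = {x : EuclideanSpace ℝ (Fin d) |
      (∀ i, 0 ≤ x i ∧ x i ≤ 1) ∧ ∑ i, x i ≤ 3 / 2}) :
    Set.extremePoints ℝ D =
      ({0} ∪ {x | ∃ i : Fin d, x = EuclideanSpace.single i (1 : ℝ)} ∪
        {x | ∃ i j : Fin d, i ≠ j ∧
          x = EuclideanSpace.single i (1 : ℝ) +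
            (1 / 2 : ℝ) • EuclideanSpace.single j (1 : ℝ)}) ∧
      (Set.extremePoints ℝ D).ncard = d ^ 2 + 1 :=
  stmt_10_general d D hD
end

section
/- The bounded subcomplex of the unbounded dwarfed d-cube is a star-like graph with d + 1 nodes and d edges: for d ≥ 2, let D = {y ∈ ℝ^d : (∀ i, 0 ≤ y i) ∧ ∀ i, (3/2) * y i − Σ_j y j ≤ 1}. Then the set of nonempty bounded exposed faces of D is exactly {{0}} ∪ {{2 • e i} : i ∈ Fin d} ∪ {segment ℝ 0 (2 • e i) : i ∈ Fin d}; in particular D has exactly 2d + 1 nonempty bounded faces. -/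
/-!
A nonempty face of `D` is `l.toExposed D` for a functional `l`, which is determined by the
values `cᵢ = l eᵢ`. For `i ≠ j` the direction `eᵢ + 2 eⱼ` lies in the recession cone of `D`, so on
a bounded face `l` must decrease along it: `cᵢ + 2 cⱼ < 0`. Hence at most one `cᵢ` is
nonnegative, and the face is `{0}` if all `cⱼ < 0`, the edge `[0, 2 eᵢ]` if `cᵢ = 0`, and the
vertex `{2 eᵢ}` if `cᵢ > 0`. Conversely each of these `2d + 1` distinct sets is exposed by a
functional of the corresponding sign pattern.
-/

open Bornology

section Ray

variable {E : Type*} [NormedAddCommGroup E] [NormedSpace ℝ E]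

lemma eq_zero_of_isBounded_of_ray_subset {S : Set E} (hS : IsBounded S) {x v : E}
    (hray : ∀ t : ℝ, 0 ≤ t → x + t • v ∈ S) : v = 0 := by
  obtain ⟨C, hC⟩ := isBounded_iff_forall_norm_le.mp hS
  have hx : ‖x‖ ≤ C := by simpa using hC _ (hray 0 le_rfl)
  have hle : ∀ t : ℝ, 0 ≤ t → t * ‖v‖ ≤ 2 * C := fun t ht => calc
    t * ‖v‖ = ‖(x + t • v) - x‖ := by rw [add_sub_cancel_left, norm_smul, Real.norm_of_nonneg ht]
    _ ≤ ‖x + t • v‖ + ‖x‖ := norm_sub_le _ _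
    _ ≤ 2 * C := by linarith [hC _ (hray t ht)]
  by_contra hv
  have hpos : 0 < ‖v‖ := norm_pos_iff.mpr hv
  have := hle ((2 * C + 1) / ‖v‖) (div_nonneg (by linarith [norm_nonneg x]) hpos.le)
  rw [div_mul_cancel₀ _ hpos.ne'] at this
  linarith

lemma ContinuousLinearMap.apply_neg_of_isBounded_toExposed {A : Set E} (l : E →L[ℝ] ℝ)
    (hb : IsBounded (l.toExposed A)) {x v : E} (hx : x ∈ l.toExposed A)
    (hray : ∀ t : ℝ, 0 ≤ t → x + t • v ∈ A) (hv : v ≠ 0) : l v < 0 := by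
  by_contra! hlv
  refine hv (eq_zero_of_isBounded_of_ray_subset hb fun t ht => ⟨hray t ht, fun y hy => ?_⟩)
  rw [map_add, map_smul, smul_eq_mul]
  nlinarith [hx.2 y hy, mul_nonneg ht hlv]

end Ray

section DwarfedCube

variable {d : ℕ}

local notation "e" => EuclideanSpace.single (𝕜 := ℝ)

lemma ContinuousLinearMap.apply_eq_sum_mul_apply_single (l : EuclideanSpace ℝ (Fin d) →L[ℝ] ℝ)
    (y : EuclideanSpace ℝ (Fin d)) :
    l y = ∑ j, y j * l (e j 1) := by
  conv_lhs => rw [← (EuclideanSpace.basisFun (Fin d) ℝ).sum_repr y]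
  simp [map_sum]

lemma innerSL_toLp_apply_single (c : Fin d → ℝ) (j : Fin d) :
    innerSL ℝ (WithLp.toLp 2 c) (e j 1) = c j := by
  simp [EuclideanSpace.inner_single_right]

lemma apply_eq_smul_single {y : EuclideanSpace ℝ (Fin d)} {i : Fin d}
    (hy : ∀ j, j ≠ i → y j = 0) : y = y i • e i 1 := by
  ext m
  by_cases hm : m = i
  · subst hm; simp
  · simp [hm, hy m hm]

lemma ContinuousLinearMap.toExposed_eq_of_apply_single_nonpos
    {A : Set (EuclideanSpace ℝ (Fin d))} (h0 : 0 ∈ A) (hA : ∀ y ∈ A, ∀ j, 0 ≤ y j)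
    (l : EuclideanSpace ℝ (Fin d) →L[ℝ] ℝ) (hl : ∀ j, l (e j 1) ≤ 0) :
    l.toExposed A = {y ∈ A | ∀ j, l (e j 1) < 0 → y j = 0} := by
  have hterm : ∀ y ∈ A, ∀ j, y j * l (e j 1) ≤ 0 := fun y hy j =>
    mul_nonpos_of_nonneg_of_nonpos (hA y hy j) (hl j)
  have hle : ∀ y ∈ A, l y ≤ 0 := fun y hy => by
    rw [l.apply_eq_sum_mul_apply_single]
    exact Finset.sum_nonpos fun j _ => hterm y hy j
  have heq : ∀ y ∈ A, l y = 0 ↔ ∀ j, l (e j 1) < 0 → y j = 0 := fun y hy => by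
    rw [l.apply_eq_sum_mul_apply_single, Finset.sum_eq_zero_iff_of_nonpos fun j _ => hterm y hy j]
    refine forall_congr' fun j => ?_
    simp only [Finset.mem_univ, true_implies, mul_eq_zero]
    exact ⟨fun h hj => h.resolve_right hj.ne, fun h => (hl j).lt_or_eq.imp_left h⟩
  ext y
  refine and_congr_right fun hy => ?_
  rw [← heq y hy]
  exact ⟨fun h => le_antisymm (hle y hy) (by simpa using h 0 h0), fun h z hz => h ▸ hle z hz⟩

def unboundedDwarfedCube (d : ℕ) : Set (EuclideanSpace ℝ (Fin d)) :=
  {y | (∀ i, 0 ≤ y i) ∧ ∀ i, (3 / 2) * y i - ∑ j, y j ≤ 1}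

lemma zero_mem_unboundedDwarfedCube : (0 : EuclideanSpace ℝ (Fin d)) ∈ unboundedDwarfedCube d :=
  ⟨fun _ => le_rfl, fun _ => by simp⟩

lemma add_smul_mem_unboundedDwarfedCube {x v : EuclideanSpace ℝ (Fin d)}
    (hx : x ∈ unboundedDwarfedCube d) (hv₀ : ∀ m, 0 ≤ v m) (hv : ∀ m, 3 / 2 * v m ≤ ∑ j, v j)
    {t : ℝ} (ht : 0 ≤ t) : x + t • v ∈ unboundedDwarfedCube d := by
  have hsum : ∑ j, (x + t • v) j = ∑ j, x j + t * ∑ j, v j := by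
    simp [Finset.sum_add_distrib, Finset.mul_sum]
  refine ⟨fun m => ?_, fun m => ?_⟩
  · simpa using add_nonneg (hx.1 m) (mul_nonneg ht (hv₀ m))
  · rw [hsum]
    simp only [PiLp.add_apply, PiLp.smul_apply, smul_eq_mul]
    nlinarith [hx.2 m, mul_le_mul_of_nonneg_left (hv m) ht]

lemma add_smul_single_add_two_smul_single_mem_unboundedDwarfedCube {i j : Fin d} (hij : i ≠ j)
    {x : EuclideanSpace ℝ (Fin d)} (hx : x ∈ unboundedDwarfedCube d) {t : ℝ} (ht : 0 ≤ t) :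
    x + t • (e i 1 + (2 : ℝ) • e j 1) ∈ unboundedDwarfedCube d := by
  have happly : ∀ m, (e i 1 + (2 : ℝ) • e j 1 : EuclideanSpace ℝ (Fin d)) m
      = (if m = i then 1 else 0) + (if m = j then 2 else 0) := by
    intro m; simp [PiLp.single_apply]
  refine add_smul_mem_unboundedDwarfedCube hx (fun m => ?_) (fun m => ?_) ht
  · rw [happly]; positivity
  · simp only [happly, Finset.sum_add_distrib, Finset.sum_ite_eq', Finset.mem_univ, if_true]
    by_cases hmi : m = i
    · subst hmi; norm_num [hij]
    · split_ifs <;> norm_num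

lemma mem_unboundedDwarfedCube_iff_of_apply_eq_zero {y : EuclideanSpace ℝ (Fin d)} {i : Fin d}
    (hy : ∀ j, j ≠ i → y j = 0) : y ∈ unboundedDwarfedCube d ↔ 0 ≤ y i ∧ y i ≤ 2 := by
  have hsum : ∑ j, y j = y i :=
    Finset.sum_eq_single_of_mem i (Finset.mem_univ i) fun j _ hj => hy j hj
  refine ⟨fun h => ⟨h.1 i, by linarith [hsum ▸ h.2 i]⟩, fun ⟨h0, h2⟩ => ⟨fun m => ?_, fun m => ?_⟩⟩
  all_goals
    rcases eq_or_ne m i with rfl | hm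
    · linarith
    · linarith [hy m hm]

lemma segment_eq_setOf_apply_eq_zero (i : Fin d) :
    segment ℝ 0 ((2 : ℝ) • e i 1) = {y ∈ unboundedDwarfedCube d | ∀ j, j ≠ i → y j = 0} := by
  ext y
  simp only [segment_eq_image', sub_zero, zero_add, Set.mem_image, Set.mem_Icc, Set.mem_ofPred_eq]
  constructor
  · rintro ⟨θ, ⟨h0, h1⟩, rfl⟩
    have hzero : ∀ j, j ≠ i → (θ • (2 : ℝ) • e i 1 : EuclideanSpace ℝ (Fin d)) j = 0 := by
      intro j hj; simp [hj]
    refine ⟨(mem_unboundedDwarfedCube_iff_of_apply_eq_zero hzero).2 ?_, hzero⟩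
    simp only [PiLp.smul_apply, PiLp.single_apply, if_true, smul_eq_mul]
    constructor <;> nlinarith
  · rintro ⟨hy, hzero⟩
    obtain ⟨h0, h2⟩ := (mem_unboundedDwarfedCube_iff_of_apply_eq_zero hzero).1 hy
    refine ⟨y i / 2, ⟨by linarith, by linarith⟩, ?_⟩
    rw [smul_smul, div_mul_cancel₀ _ two_ne_zero, ← apply_eq_smul_single hzero]

lemma two_smul_single_mem_unboundedDwarfedCube (i : Fin d) :
    (2 : ℝ) • e i 1 ∈ unboundedDwarfedCube d :=
  (mem_unboundedDwarfedCube_iff_of_apply_eq_zero (i := i) fun j hj => by simp [hj]).2 (by simp)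

lemma ContinuousLinearMap.toExposed_unboundedDwarfedCube_eq_singleton
    (l : EuclideanSpace ℝ (Fin d) →L[ℝ] ℝ) {i : Fin d} (hi : 0 < l (e i 1))
    (hl : ∀ j, j ≠ i → 2 * l (e i 1) + l (e j 1) < 0) :
    l.toExposed (unboundedDwarfedCube d) = {(2 : ℝ) • e i 1} := by
  have hsplit (f : Fin d → ℝ) : ∑ j, f j = f i + ∑ j ∈ {i}ᶜ, f j :=
    Fintype.sum_eq_add_sum_compl i f
  have hterm : ∀ y ∈ unboundedDwarfedCube d, ∀ j ∈ ({i}ᶜ : Finset (Fin d)),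
      y j * (2 * l (e i 1) + l (e j 1)) ≤ 0 := fun y hy j hj =>
    mul_nonpos_of_nonneg_of_nonpos (hy.1 j) (hl j (by simpa using hj)).le
  -- `l y = 2 l(eᵢ) ((3/2) yᵢ - ∑ y) + ∑_{j ≠ i} (2 l(eᵢ) + l(eⱼ)) yⱼ`, and the `i`-th dwarfing
  -- inequality bounds the first term by `2 l(eᵢ)`.
  have hbound : ∀ y ∈ unboundedDwarfedCube d,
      l y ≤ 2 * l (e i 1) + ∑ j ∈ {i}ᶜ, y j * (2 * l (e i 1) + l (e j 1)) := fun y hy => by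
    have hyi := hy.2 i
    rw [hsplit] at hyi
    rw [l.apply_eq_sum_mul_apply_single, hsplit]
    simp only [mul_add, Finset.sum_add_distrib, ← Finset.sum_mul]
    nlinarith [mul_le_mul_of_nonneg_left hyi hi.le]
  have hvert : l ((2 : ℝ) • e i 1) = 2 * l (e i 1) := by simp
  ext x
  simp only [ContinuousLinearMap.toExposed, Set.mem_ofPred_eq, Set.mem_singleton_iff]
  constructor
  · rintro ⟨hx, hmax⟩
    have hge := hvert ▸ hmax _ (two_smul_single_mem_unboundedDwarfedCube i)
    have hzero : ∀ j, j ≠ i → x j = 0 := by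
      have := (Finset.sum_eq_zero_iff_of_nonpos (hterm x hx)).1
        (le_antisymm (Finset.sum_nonpos (hterm x hx)) (by linarith [hbound x hx]))
      exact fun j hj => (mul_eq_zero.1 (this j (by simpa using hj))).resolve_right (hl j hj).ne
    have hxi := ((mem_unboundedDwarfedCube_iff_of_apply_eq_zero hzero).1 hx).2
    rw [apply_eq_smul_single hzero, map_smul, smul_eq_mul] at hge
    rw [apply_eq_smul_single hzero]
    congr 1
    nlinarith
  · rintro rfl
    refine ⟨two_smul_single_mem_unboundedDwarfedCube i,
      fun y hy => hvert ▸ (hbound y hy).trans ?_⟩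
    linarith [Finset.sum_nonpos (hterm y hy)]

lemma ContinuousLinearMap.toExposed_unboundedDwarfedCube_eq_zero
    (l : EuclideanSpace ℝ (Fin d) →L[ℝ] ℝ) (hl : ∀ j, l (e j 1) < 0) :
    l.toExposed (unboundedDwarfedCube d) = {0} := by
  rw [l.toExposed_eq_of_apply_single_nonpos zero_mem_unboundedDwarfedCube (fun y hy => hy.1)
    fun j => (hl j).le]
  ext y
  simp only [Set.mem_ofPred_eq, Set.mem_singleton_iff, hl, true_implies]
  constructor
  · rintro ⟨-, hy⟩
    ext j
    exact hy j
  · rintro rfl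
    exact ⟨zero_mem_unboundedDwarfedCube, fun _ => rfl⟩

lemma ContinuousLinearMap.toExposed_unboundedDwarfedCube_eq_segment
    (l : EuclideanSpace ℝ (Fin d) →L[ℝ] ℝ) {i : Fin d} (hi : l (e i 1) = 0)
    (hl : ∀ j, j ≠ i → l (e j 1) < 0) :
    l.toExposed (unboundedDwarfedCube d) = segment ℝ 0 ((2 : ℝ) • e i 1) := by
  have hneg : ∀ j, l (e j 1) < 0 ↔ j ≠ i := fun j =>
    ⟨fun hj hji => (hji ▸ hj).ne hi, hl j⟩
  rw [l.toExposed_eq_of_apply_single_nonpos zero_mem_unboundedDwarfedCube (fun y hy => hy.1)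
    fun j => (eq_or_ne j i).elim (fun h => (h ▸ hi).le) fun h => (hl j h).le,
    segment_eq_setOf_apply_eq_zero]
  simp only [hneg]

lemma ContinuousLinearMap.apply_single_add_two_mul_apply_single_neg
    (l : EuclideanSpace ℝ (Fin d) →L[ℝ] ℝ) (hb : IsBounded (l.toExposed (unboundedDwarfedCube d)))
    (hne : (l.toExposed (unboundedDwarfedCube d)).Nonempty) {i j : Fin d} (hij : i ≠ j) :
    l (e i 1) + 2 * l (e j 1) < 0 := by
  obtain ⟨x, hx⟩ := hne
  have hv : (e i 1 + (2 : ℝ) • e j 1 : EuclideanSpace ℝ (Fin d)) ≠ 0 := fun h => by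
    simpa [hij] using congrArg (· i) h
  simpa using l.apply_neg_of_isBounded_toExposed hb hx
    (fun t ht => add_smul_single_add_two_smul_single_mem_unboundedDwarfedCube hij hx.1 ht) hv

def dwarfedBoundedFace : Option (Fin d ⊕ Fin d) → Set (EuclideanSpace ℝ (Fin d))
  | none => {0}
  | some (.inl i) => {(2 : ℝ) • e i 1}
  | some (.inr i) => segment ℝ 0 ((2 : ℝ) • e i 1)

lemma mem_range_dwarfedBoundedFace {F : Set (EuclideanSpace ℝ (Fin d))}
    (hF : IsExposed ℝ (unboundedDwarfedCube d) F) (hne : F.Nonempty) (hb : IsBounded F) :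
    F ∈ Set.range dwarfedBoundedFace := by
  obtain ⟨l, rfl⟩ := hF hne
  have hray := fun i j (hij : i ≠ j) => l.apply_single_add_two_mul_apply_single_neg hb hne hij
  by_cases hneg : ∀ j, l (e j 1) < 0
  · exact ⟨none, (l.toExposed_unboundedDwarfedCube_eq_zero hneg).symm⟩
  push Not at hneg
  obtain ⟨i, hi⟩ := hneg
  rcases hi.eq_or_lt with hi | hi
  · refine ⟨some (.inr i), (l.toExposed_unboundedDwarfedCube_eq_segment hi.symm ?_).symm⟩
    exact fun j hj => by linarith [hray i j hj.symm]
  · refine ⟨some (.inl i), (l.toExposed_unboundedDwarfedCube_eq_singleton hi ?_).symm⟩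
    exact fun j hj => by linarith [hray j i hj]

lemma isExposed_dwarfedBoundedFace (k : Option (Fin d ⊕ Fin d)) :
    IsExposed ℝ (unboundedDwarfedCube d) (dwarfedBoundedFace k) := by
  rcases k with _ | i | i <;> simp only [dwarfedBoundedFace]
  · rw [← (innerSL ℝ (WithLp.toLp 2 fun _ => -1)).toExposed_unboundedDwarfedCube_eq_zero
      fun j => by simp [innerSL_toLp_apply_single]]
    exact ContinuousLinearMap.toExposed.isExposed
  · rw [← (innerSL ℝ (WithLp.toLp 2 fun j => if j = i then 1 else -3)
      ).toExposed_unboundedDwarfedCube_eq_singleton (i := i) (by simp [innerSL_toLp_apply_single])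
      fun j hj => by simp [innerSL_toLp_apply_single, hj]; norm_num]
    exact ContinuousLinearMap.toExposed.isExposed
  · rw [← (innerSL ℝ (WithLp.toLp 2 fun j => if j = i then 0 else -1)
      ).toExposed_unboundedDwarfedCube_eq_segment (i := i) (by simp [innerSL_toLp_apply_single])
      fun j hj => by simp [innerSL_toLp_apply_single, hj]]
    exact ContinuousLinearMap.toExposed.isExposed

lemma dwarfedBoundedFace_nonempty (k : Option (Fin d ⊕ Fin d)) :
    (dwarfedBoundedFace k).Nonempty := by
  rcases k with _ | i | i
  exacts [Set.singleton_nonempty _, Set.singleton_nonempty _, ⟨0, left_mem_segment ℝ _ _⟩]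

lemma isBounded_dwarfedBoundedFace (k : Option (Fin d ⊕ Fin d)) :
    IsBounded (dwarfedBoundedFace k) := by
  rcases k with _ | i | i
  · exact isBounded_singleton
  · exact isBounded_singleton
  · rw [dwarfedBoundedFace, ← convexHull_pair]
    exact isBounded_convexHull.2 (Set.toFinite _).isBounded

lemma two_smul_single_mem_segment_iff {i j : Fin d} :
    (2 : ℝ) • e i 1 ∈ segment ℝ 0 ((2 : ℝ) • e j 1) ↔ i = j := by
  refine ⟨fun h => ?_, fun h => h ▸ right_mem_segment ℝ _ _⟩
  rw [segment_eq_setOf_apply_eq_zero] at h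
  by_contra hij
  simpa using h.2 i hij

lemma two_smul_single_ne_zero (i : Fin d) : (2 : ℝ) • e i 1 ≠ 0 := fun h => by
  simpa using congrArg (· i) h

lemma two_smul_single_injective : Function.Injective fun i : Fin d => (2 : ℝ) • e i 1 :=
  fun i j h => two_smul_single_mem_segment_iff.1 <| by
    simp only at h
    exact h ▸ right_mem_segment ℝ _ _

-- A face is recognised by whether it contains `0` and by which of the points `2 eᵢ` it contains.
lemma dwarfedBoundedFace_injective : Function.Injective (dwarfedBoundedFace (d := d)) := by
  intro k k' h
  have h0 := congrArg (0 ∈ ·) h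
  have hv := fun i => congrArg ((2 : ℝ) • e i 1 ∈ ·) h
  rcases k with _ | i | i <;> rcases k' with _ | j | j <;>
    simp only [dwarfedBoundedFace, Set.mem_singleton_iff, left_mem_segment, eq_iff_iff,
      two_smul_single_mem_segment_iff, two_smul_single_injective.eq_iff,
      eq_comm (a := (0 : EuclideanSpace ℝ (Fin d))), two_smul_single_ne_zero, iff_true,
      true_iff, Option.some.injEq, Sum.inl.injEq, Sum.inr.injEq] at h0 hv ⊢ <;>
    first | simpa using hv i | simpa using hv j

end DwarfedCube

theorem stmt_11_general (d : ℕ)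
    (D : Set (EuclideanSpace ℝ (Fin d)))
    (hD : D = {y : EuclideanSpace ℝ (Fin d) |
      (∀ i, 0 ≤ y i) ∧ ∀ i, (3 / 2) * y i - ∑ j, y j ≤ 1}) :
    {F : Set (EuclideanSpace ℝ (Fin d)) |
        IsExposed ℝ D F ∧ F.Nonempty ∧ Bornology.IsBounded F} =
      ({{0}} ∪
        {F | ∃ i : Fin d, F = {(2 : ℝ) • EuclideanSpace.single i (1 : ℝ)}} ∪
        {F | ∃ i : Fin d,
          F = segment ℝ 0 ((2 : ℝ) • EuclideanSpace.single i (1 : ℝ))}) ∧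
      Set.ncard {F : Set (EuclideanSpace ℝ (Fin d)) |
          IsExposed ℝ D F ∧ F.Nonempty ∧ Bornology.IsBounded F} = 2 * d + 1 := by
  obtain rfl : D = unboundedDwarfedCube d := hD
  have hfaces : {F | IsExposed ℝ (unboundedDwarfedCube d) F ∧ F.Nonempty ∧ IsBounded F} =
      Set.range dwarfedBoundedFace := by
    ext F
    refine ⟨fun ⟨hF, hne, hb⟩ => mem_range_dwarfedBoundedFace hF hne hb, ?_⟩
    rintro ⟨k, rfl⟩
    exact ⟨isExposed_dwarfedBoundedFace k, dwarfedBoundedFace_nonempty k,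
      isBounded_dwarfedBoundedFace k⟩
  refine ⟨hfaces.trans ?_, ?_⟩
  · ext F
    simp [Option.exists, Sum.exists, dwarfedBoundedFace, eq_comm, or_assoc]
  · rw [hfaces, Set.ncard_range_of_injective dwarfedBoundedFace_injective]
    simp [two_mul]

/-- For `d ≥ 2`, the bounded subcomplex of the unbounded dwarfed
`d`-cube `D` consists exactly of the vertex `{0}`, the vertices `{2 eᵢ}`, and the
edges `[0, 2 eᵢ]`; in particular `D` has exactly `2d + 1` nonempty bounded faces. -/
theorem stmt_11 (d : ℕ) (hd : 2 ≤ d)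
    (D : Set (EuclideanSpace ℝ (Fin d)))
    (hD : D = {y : EuclideanSpace ℝ (Fin d) |
      (∀ i, 0 ≤ y i) ∧ ∀ i, (3 / 2) * y i - ∑ j, y j ≤ 1}) :
    {F : Set (EuclideanSpace ℝ (Fin d)) |
        IsExposed ℝ D F ∧ F.Nonempty ∧ Bornology.IsBounded F} =
      ({{0}} ∪
        {F | ∃ i : Fin d, F = {(2 : ℝ) • EuclideanSpace.single i (1 : ℝ)}} ∪
        {F | ∃ i : Fin d,
          F = segment ℝ 0 ((2 : ℝ) • EuclideanSpace.single i (1 : ℝ))}) ∧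
      Set.ncard {F : Set (EuclideanSpace ℝ (Fin d)) |
          IsExposed ℝ D F ∧ F.Nonempty ∧ Bornology.IsBounded F} = 2 * d + 1 :=
  stmt_11_general d D hD
end
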